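/- arXiv:1003.0245 — 6 statements merged into one kernel-verified Lean document; each statement's English description precedes it below -/
import Mathlib

section
/- Let $A \subseteq \mathbb{Z}^n$ be a finite nonempty set and let $\Delta(A)$ denote the convex hull of $A$ in $\mathbb{R}^n$. Then $A + (n\Delta(A) \cap \mathbb{Z}^n) = ((n+1)\Delta(A)) \cap \mathbb{Z}^n = (\Delta(A) \cap \mathbb{Z}^n) + (n\Delta(A) \cap \mathbb{Z}^n)$, where $k\Delta$ denotes the dilation of $\Delta$ by the factor $k$ and sums of sets are Minkowski sums. -/
open Pointwise

/-- The embedding of the lattice `ℤⁿ` into `ℝⁿ`. -/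
def latticeEmb (n : ℕ) : (Fin n → ℤ) → (Fin n → ℝ) := fun k i => (k i : ℝ)

/-- The set of integral points of `ℝⁿ`. -/
def intPts (n : ℕ) : Set (Fin n → ℝ) := Set.range (latticeEmb n)

lemma intPts_add {n : ℕ} {x y : Fin n → ℝ} (hx : x ∈ intPts n) (hy : y ∈ intPts n) :
    x + y ∈ intPts n := by
  obtain ⟨a, rfl⟩ := hx; obtain ⟨b, rfl⟩ := hy
  exact ⟨a + b, by funext i; simp [latticeEmb]⟩

lemma intPts_sub {n : ℕ} {x y : Fin n → ℝ} (hx : x ∈ intPts n) (hy : y ∈ intPts n) :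
    x - y ∈ intPts n := by
  obtain ⟨a, rfl⟩ := hx; obtain ⟨b, rfl⟩ := hy
  exact ⟨a - b, by funext i; simp [latticeEmb]⟩

/-- A nonnegative combination with total weight `c` lies in `c • convexHull`. -/
lemma sum_mem_smul_convexHull {E : Type*} [AddCommGroup E] [Module ℝ E]
    {s : Set E} (hs : s.Nonempty) (t : Finset E) (hts : ↑t ⊆ s)
    (g : E → ℝ) (hg : ∀ i ∈ t, 0 ≤ g i) {c : ℝ} (hc : ∑ i ∈ t, g i = c) :
    (∑ i ∈ t, g i • i) ∈ c • convexHull ℝ s := by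
  rcases eq_or_lt_of_le (hc ▸ Finset.sum_nonneg hg) with h0 | hcpos
  · -- c = 0 : all weights vanish
    have hgz : ∀ i ∈ t, g i = 0 := by
      intro i hi
      exact (Finset.sum_eq_zero_iff_of_nonneg hg).1 (hc.trans h0.symm) i hi
    have : (∑ i ∈ t, g i • i) = 0 := by
      apply Finset.sum_eq_zero
      intro i hi; rw [hgz i hi, zero_smul]
    rw [this, ← h0, Set.zero_smul_set (hs.mono (subset_convexHull ℝ s))]
    simp
  · refine ⟨t.centerMass g id,
      convexHull_mono hts (t.centerMass_id_mem_convexHull hg (by rw [hc]; exact hcpos)), ?_⟩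
    show c • _ = _
    rw [Finset.centerMass, hc, smul_smul, mul_inv_cancel₀ hcpos.ne', one_smul]
    simp

/-- For a finite nonempty `A ⊆ ℤⁿ` with convex hull `Δ(A)`,
`A + (nΔ(A) ∩ ℤⁿ) = ((n+1)Δ(A)) ∩ ℤⁿ = (Δ(A) ∩ ℤⁿ) + (nΔ(A) ∩ ℤⁿ)`. -/
theorem sum_with_dilated_lattice_points (n : ℕ) (A : Finset (Fin n → ℤ)) (hA : A.Nonempty) :
    latticeEmb n '' ↑A + (((n : ℝ) • convexHull ℝ (latticeEmb n '' ↑A)) ∩ intPts n) =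
      ((((n : ℝ) + 1) • convexHull ℝ (latticeEmb n '' ↑A)) ∩ intPts n) ∧
    ((((n : ℝ) + 1) • convexHull ℝ (latticeEmb n '' ↑A)) ∩ intPts n) =
      (convexHull ℝ (latticeEmb n '' ↑A) ∩ intPts n) +
        (((n : ℝ) • convexHull ℝ (latticeEmb n '' ↑A)) ∩ intPts n) := by
  set S : Set (Fin n → ℝ) := latticeEmb n '' ↑A with hS
  have hSne : S.Nonempty := (Set.image_nonempty.2 (by exact_mod_cast hA))
  have hSint : S ⊆ intPts n := by rintro x ⟨a, _, rfl⟩; exact ⟨a, rfl⟩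
  -- inclusion 1 : A + (nΔ ∩ ℤ) ⊆ (Δ ∩ ℤ) + (nΔ ∩ ℤ)
  have h1 : S + (((n : ℝ) • convexHull ℝ S) ∩ intPts n) ⊆
      (convexHull ℝ S ∩ intPts n) + (((n : ℝ) • convexHull ℝ S) ∩ intPts n) :=
    Set.add_subset_add_right fun x hx => ⟨subset_convexHull ℝ S hx, hSint hx⟩
  -- inclusion 2 : (Δ ∩ ℤ) + (nΔ ∩ ℤ) ⊆ ((n+1)Δ ∩ ℤ)
  have h2 : (convexHull ℝ S ∩ intPts n) + (((n : ℝ) • convexHull ℝ S) ∩ intPts n) ⊆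
      ((((n : ℝ) + 1) • convexHull ℝ S) ∩ intPts n) := by
    rintro z ⟨x, ⟨hx, hxi⟩, y, ⟨hy, hyi⟩, rfl⟩
    constructor
    · have : ((n : ℝ) + 1) • convexHull ℝ S
          = (1 : ℝ) • convexHull ℝ S + (n : ℝ) • convexHull ℝ S := by
        rw [add_comm (n : ℝ) 1]
        exact (convex_convexHull ℝ S).add_smul zero_le_one (Nat.cast_nonneg n)
      rw [this, one_smul]
      exact ⟨x, hx, y, hy, rfl⟩
    · exact intPts_add hxi hyi
  -- inclusion 3 : ((n+1)Δ ∩ ℤ) ⊆ A + (nΔ ∩ ℤ)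
  have h3 : ((((n : ℝ) + 1) • convexHull ℝ S) ∩ intPts n) ⊆
      S + (((n : ℝ) • convexHull ℝ S) ∩ intPts n) := by
    rintro z ⟨⟨w, hw, rfl⟩, hzi⟩
    -- Carathéodory
    rw [convexHull_eq_union] at hw
    simp only [Set.mem_iUnion] at hw
    obtain ⟨t, hts, hai, hwt⟩ := hw
    have hcard : t.card ≤ n + 1 := by
      have := hai.card_le_finrank_succ
      rw [Fintype.card_coe] at this
      refine this.trans (Nat.add_le_add_right ?_ 1)
      calc Module.finrank ℝ (vectorSpan ℝ (Set.range ((↑) : t → Fin n → ℝ)))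
          ≤ Module.finrank ℝ (Fin n → ℝ) := Submodule.finrank_le _
        _ = n := by simp
    rw [Finset.convexHull_eq] at hwt
    obtain ⟨f, hf0, hf1, rfl⟩ := hwt
    have htne : t.Nonempty := by
      rcases Finset.eq_empty_or_nonempty t with rfl | h
      · simp at hf1
      · exact h
    -- the rescaled weights
    set g : (Fin n → ℝ) → ℝ := fun i => ((n : ℝ) + 1) * f i with hg
    have hgsum : ∑ i ∈ t, g i = (n : ℝ) + 1 := by
      rw [hg, ← Finset.mul_sum, hf1, mul_one]
    have hzdef : ((n : ℝ) + 1) • t.centerMass f id = ∑ i ∈ t, g i • i := by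
      rw [Finset.centerMass, hf1, inv_one, one_smul, Finset.smul_sum]
      refine Finset.sum_congr rfl fun i hi => ?_
      rw [hg, smul_smul]; rfl
    -- pigeonhole: some weight is ≥ 1
    have hpig : ∃ a ∈ t, (1 : ℝ) ≤ g a := by
      have hle : ∑ _i ∈ t, (1 : ℝ) ≤ ∑ i ∈ t, g i := by
        rw [hgsum, Finset.sum_const, nsmul_eq_mul, mul_one]
        exact_mod_cast hcard
      exact Finset.exists_le_of_sum_le htne hle
    obtain ⟨a, hat, hga⟩ := hpig
    have haS : a ∈ S := hts hat
    refine ⟨a, haS, ((n : ℝ) + 1) • t.centerMass f id - a, ⟨?_, ?_⟩, by module⟩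
    · -- z - a ∈ n • Δ
      set g' : (Fin n → ℝ) → ℝ := fun i => g i - if i = a then 1 else 0 with hg'
      have hsum' : ∑ i ∈ t, g' i = (n : ℝ) := by
        rw [hg', Finset.sum_sub_distrib, hgsum, Finset.sum_ite_eq' t a (fun _ => (1:ℝ)),
          if_pos hat]
        ring
      have hval : ∑ i ∈ t, g' i • i = ((n : ℝ) + 1) • t.centerMass f id - a := by
        rw [hzdef, hg']
        simp only [sub_smul, Finset.sum_sub_distrib]
        congr 1
        rw [Finset.sum_eq_single a (fun b _ hb => by simp [hb]) (fun h => absurd hat h)]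
        simp
      have := sum_mem_smul_convexHull hSne t hts g' (fun i hi => ?_) hsum'
      · rwa [hval] at this
      · rw [hg']
        by_cases h : i = a
        · subst h; simpa using hga
        · simp only [if_neg h, sub_zero]
          exact mul_nonneg (by positivity) (hf0 i hi)
    · exact intPts_sub hzi (hSint haS)
  exact ⟨Set.Subset.antisymm (h1.trans h2) h3, Set.Subset.antisymm (h3.trans h1) h2⟩
end

section
/- Let $A, B \subseteq \mathbb{Z}^n$ be finite nonempty sets. Then there exists a finite nonempty set $C \subseteq \mathbb{Z}^n$ with $A + C = B + C$ (Minkowski sum) if and only if the convex hulls of $A$ and $B$ in $\mathbb{R}^n$ coincide. (Equivalently: the Grothendieck semigroup of the semigroup $\mathcal{K}$ of finite nonempty subsets of $\mathbb{Z}^n$ under Minkowski addition is isomorphic to the semigroup $\mathcal{P}$ of convex integral polytopes under Minkowski sum, via $A \mapsto \Delta(A)$.) -/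
open Pointwise

/-!
If `A + C = B + C`, then a linear functional separating a point of `A` from `conv B` would,
evaluated at a maximiser over `C`, contradict `a + c = b + c'`; so `conv A = conv B`.

Conversely, every point `m` of `A ∪ B` is a lattice point of `conv A`. Carathéodory writes it as a
convex combination of affinely independent points of `A`, whose weights are then unique and hence
rational, so `d • m` is a sum of `d` elements of `A` for some `d > 0`. By pigeonhole, a sum of
`k + 1 ≥ ∑ d` elements of `A ∪ B` contains `d m` copies of one `m`, which may be traded for
elements of `A`; thus `A + k • (A ∪ B) = (k + 1) • (A ∪ B)`, and likewise for `B`.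
-/

theorem subset_convexHull_of_add_subset_add {E : Type*} [AddCommGroup E] [Module ℝ E]
    [TopologicalSpace E] [T2Space E] [IsTopologicalAddGroup E] [ContinuousSMul ℝ E]
    [LocallyConvexSpace ℝ E] {A B C : Set E} (hB : B.Finite) (hC : IsCompact C)
    (hC₀ : C.Nonempty) (h : A + C ⊆ B + C) : A ⊆ convexHull ℝ B := by
  intro a ha
  by_contra ha_out
  obtain ⟨f, u, hfB, hfa⟩ := geometric_hahn_banach_closed_point (convex_convexHull ℝ B)
    (hB.isClosed_convexHull ℝ) ha_out
  obtain ⟨c, hc, hc_max⟩ := hC.exists_isMaxOn hC₀ f.continuous.continuousOn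
  obtain ⟨b, hb, c', hc', hbc'⟩ := h (Set.add_mem_add ha hc)
  have hfbc' : f b + f c' = f a + f c := by rw [← map_add, ← map_add, ← hbc']
  linarith [hfB b (subset_convexHull ℝ B hb), show f c' ≤ f c from hc_max hc']

theorem convexHull_eq_of_add_eq_add {E : Type*} [AddCommGroup E] [Module ℝ E]
    [TopologicalSpace E] [T2Space E] [IsTopologicalAddGroup E] [ContinuousSMul ℝ E]
    [LocallyConvexSpace ℝ E] {A B C : Set E} (hA : A.Finite) (hB : B.Finite)
    (hC : IsCompact C) (hC₀ : C.Nonempty) (h : A + C = B + C) :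
    convexHull ℝ A = convexHull ℝ B :=
  (convexHull_min (subset_convexHull_of_add_subset_add hB hC hC₀ h.le)
    (convex_convexHull ℝ B)).antisymm
    (convexHull_min (subset_convexHull_of_add_subset_add hA hC hC₀ h.ge)
      (convex_convexHull ℝ A))

/-- A `K`-linear retraction `g : L → K` turns the weights `w` into a second solution of the same
system with coefficients in `K`; affine independence makes the two coincide. -/
theorem AffineIndependent.mem_range_algebraMap_of_sum_smul_eq {K L ι κ : Type*} [Field K]
    [Field L] [Algebra K L] [Fintype ι] {z : ι → κ → K} {x : κ → K} {w : ι → L}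
    (hz : AffineIndependent L fun i ↦ algebraMap K L ∘ z i) (hw : ∑ i, w i = 1)
    (hwx : ∑ i, w i • (algebraMap K L ∘ z i) = algebraMap K L ∘ x) (i : ι) :
    w i ∈ Set.range (algebraMap K L) := by
  obtain ⟨g, hg⟩ := (Algebra.linearMap K L).exists_leftInverse_of_injective
    (LinearMap.ker_eq_bot.2 (algebraMap K L).injective)
  have hg' (c : K) : g (algebraMap K L c) = c := LinearMap.congr_fun hg c
  have hg_mul (c : K) (l : L) : g (l * algebraMap K L c) = g l * c := by
    rw [mul_comm, ← Algebra.smul_def, map_smul, smul_eq_mul, mul_comm]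
  set w' : ι → L := fun i ↦ algebraMap K L (g (w i))
  have hw' : ∑ i, w' i = ∑ i, w i := by
    simp only [w', ← map_sum, hw, ← map_one (algebraMap K L), hg']
  have hw'x :
      ∑ i, w' i • (algebraMap K L ∘ z i) = ∑ i, w i • (algebraMap K L ∘ z i) := by
    rw [hwx]
    funext j
    have hj := congrFun hwx j
    simp only [Finset.sum_apply, Pi.smul_apply, Function.comp_apply, smul_eq_mul] at hj ⊢
    rw [← hg' (x j), ← hj, map_sum]
    simp only [w', ← map_mul, ← map_sum, hg_mul]
  exact ⟨g (w i), hz.eq_of_sum_eq_sum hw' hw'x i (Finset.mem_univ i)⟩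

theorem mem_convexHull_of_algebraMap_mem_convexHull {𝕜 κ : Type*} [Field 𝕜]
    [LinearOrder 𝕜] [IsStrictOrderedRing 𝕜] {S : Set (κ → ℚ)} {x : κ → ℚ}
    (hx : algebraMap ℚ 𝕜 ∘ x ∈ convexHull 𝕜 ((algebraMap ℚ 𝕜 ∘ ·) '' S)) :
    x ∈ convexHull ℚ S := by
  obtain ⟨ι, _, z, w, hzS, hz, hw_pos, hw, hwx⟩ := eq_pos_convex_span_of_mem_convexHull hx
  choose y hyS hyz using fun i ↦ hzS (Set.mem_range_self i)
  obtain rfl : (fun i ↦ algebraMap ℚ 𝕜 ∘ y i) = z := funext hyz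
  choose q hqw using hz.mem_range_algebraMap_of_sum_smul_eq hw hwx
  obtain rfl : (fun i ↦ algebraMap ℚ 𝕜 (q i)) = w := funext hqw
  have hq_pos (i : ι) : 0 < q i := by simpa using hw_pos i
  have hq : ∑ i, q i = 1 := by
    apply (algebraMap ℚ 𝕜).injective
    simpa using hw
  have hqx : ∑ i, q i • y i = x := by
    funext j
    apply (algebraMap ℚ 𝕜).injective
    simpa using congrFun hwx j
  rw [← hqx]
  exact (convex_convexHull ℚ S).sum_mem (fun i _ ↦ (hq_pos i).le) hq
    fun i _ ↦ subset_convexHull ℚ S (hyS i)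

namespace Finset

variable {α : Type*} [DecidableEq α] [AddCommMonoid α]

theorem sum_nsmul_mem_nsmul {ι : Type*} {A : Finset α} (t : Finset ι) (m : ι → ℕ)
    {v : ι → α} (hv : ∀ i ∈ t, v i ∈ A) : ∑ i ∈ t, m i • v i ∈ (∑ i ∈ t, m i) • A := by
  classical
  induction t using Finset.induction_on with
  | empty => simp
  | insert i t hi ih =>
    rw [sum_insert hi, sum_insert hi, add_nsmul]
    exact add_mem_add (nsmul_mem_nsmul (hv i (mem_insert_self i t)))
      (ih fun j hj ↦ hv j (mem_insert_of_mem hj))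

theorem exists_sum_nsmul_eq_of_mem_nsmul {M : Finset α} {k : ℕ} {x : α} (hx : x ∈ k • M) :
    ∃ c : α → ℕ, ∑ m ∈ M, c m = k ∧ ∑ m ∈ M, c m • m = x := by
  induction k generalizing x with
  | zero => exact ⟨0, by simp_all⟩
  | succ k ih =>
    rw [succ_nsmul', mem_add] at hx
    obtain ⟨m, hm, y, hy, rfl⟩ := hx
    obtain ⟨c, hc, rfl⟩ := ih hy
    refine ⟨c + Pi.single m 1, ?_, ?_⟩
    · simp [sum_add_distrib, hc, hm]
    · simp [sum_add_distrib, add_nsmul, Pi.single_apply, hm, add_comm]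

theorem add_nsmul_eq_succ_nsmul {A M : Finset α} (hAM : A ⊆ M) {d : α → ℕ}
    (hd_pos : ∀ m ∈ M, 0 < d m) (hd : ∀ m ∈ M, d m • m ∈ d m • A) {k : ℕ}
    (hk : ∑ m ∈ M, d m ≤ k) : A + k • M = (k + 1) • M := by
  -- Pigeonhole: some `m` is used more than `d m` times in `x`.
  refine ((add_subset_add_right hAM).trans_eq (succ_nsmul' M k).symm).antisymm fun x hx ↦ ?_
  obtain ⟨c, hc, rfl⟩ := exists_sum_nsmul_eq_of_mem_nsmul hx
  obtain ⟨m, hm, hdc⟩ := exists_lt_of_sum_lt ((hk.trans_lt k.lt_succ_self).trans_eq hc.symm)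
  obtain ⟨c', rfl⟩ : ∃ c' : α → ℕ, c = c' + Pi.single m (d m) :=
    ⟨c - Pi.single m (d m), by ext j; obtain rfl | hj := eq_or_ne j m <;> simp [*]; omega⟩
  have hdk : d m ≤ k := (single_le_sum (fun _ _ ↦ Nat.zero_le _) hm).trans hk
  have hc' : ∑ j ∈ M, c' j = k + 1 - d m := by
    simp only [Pi.add_apply, sum_add_distrib, sum_pi_single', if_pos hm] at hc
    omega
  have hsplit : d m • A + (k + 1 - d m) • M ⊆ A + k • M := calc
    d m • A + (k + 1 - d m) • M = A + ((d m - 1) • A + (k + 1 - d m) • M) := by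
      rw [← add_assoc, ← succ_nsmul', Nat.sub_add_cancel (hd_pos m hm)]
    _ ⊆ A + ((d m - 1) • M + (k + 1 - d m) • M) := by gcongr
    _ = A + k • M := by
      have := hd_pos m hm
      rw [← add_nsmul, show d m - 1 + (k + 1 - d m) = k by omega]
  apply hsplit
  rw [← hc']
  simpa [sum_add_distrib, add_nsmul, Pi.single_apply, hm, add_comm] using
    add_mem_add (hd m hm) (sum_nsmul_mem_nsmul M c' fun j hj ↦ hj)

end Finset

theorem Finset.exists_natCast_eq_mul_of_nonneg {ι : Type*} (t : Finset ι) {w : ι → ℚ}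
    (hw : ∀ i ∈ t, 0 ≤ w i) :
    ∃ d : ℕ, 0 < d ∧ ∃ m : ι → ℕ, ∀ i ∈ t, (m i : ℚ) = d * w i := by
  refine ⟨∏ i ∈ t, (w i).den, prod_pos fun i _ ↦ (w i).den_pos, ?_⟩
  have (i : ι) (hi : i ∈ t) : ∃ m : ℕ, (m : ℚ) = (∏ i ∈ t, (w i).den : ℕ) * w i := by
    obtain ⟨e, he⟩ := dvd_prod_of_mem (fun i ↦ (w i).den) hi
    have hnum : ((w i).num.toNat : ℚ) = (w i).num := by
      exact_mod_cast Int.toNat_of_nonneg (Rat.num_nonneg.2 (hw i hi))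
    refine ⟨e * (w i).num.toNat, ?_⟩
    rw [he, Nat.cast_mul, Nat.cast_mul, hnum, ← Rat.mul_den_eq_num]
    ring
  choose! m hm using this
  exact ⟨m, hm⟩

theorem exists_nsmul_mem_nsmul_of_intCast_mem_convexHull {κ : Type*} [DecidableEq (κ → ℤ)]
    {A : Finset (κ → ℤ)} {x : κ → ℤ}
    (hx : ((↑) ∘ x : κ → ℚ) ∈
      convexHull ℚ ((fun a : κ → ℤ ↦ ((↑) ∘ a : κ → ℚ)) '' A)) :
    ∃ d : ℕ, 0 < d ∧ d • x ∈ d • A := by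
  obtain ⟨ι, t, w, z, hw_nonneg, hw, hzA, hwzx⟩ := (convexHull_eq _).subset hx
  choose! v hvA hvz using hzA
  obtain ⟨d, hd, m, hm⟩ := t.exists_natCast_eq_mul_of_nonneg hw_nonneg
  have hm_sum : ∑ i ∈ t, m i = d := by
    have : ∑ i ∈ t, (m i : ℚ) = d := by
      rw [Finset.sum_congr rfl hm, ← Finset.mul_sum, hw, mul_one]
    exact_mod_cast this
  have hmv : ∑ i ∈ t, m i • v i = d • x := by
    rw [Finset.centerMass_eq_of_sum_1 _ _ hw] at hwzx
    funext j
    have hj := congrFun hwzx j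
    simp only [Finset.sum_apply, Pi.smul_apply, smul_eq_mul, Function.comp_apply] at hj
    apply Int.cast_injective (α := ℚ)
    simp only [Finset.sum_apply, Pi.smul_apply]
    simp only [nsmul_eq_mul, Int.cast_sum, Int.cast_mul, Int.cast_natCast]
    rw [← hj, Finset.mul_sum]
    refine Finset.sum_congr rfl fun i hi ↦ ?_
    rw [hm i hi, ← hvz i hi, mul_assoc]
    rfl
  refine ⟨d, hd, ?_⟩
  rw [← hmv, ← hm_sum]
  exact Finset.sum_nsmul_mem_nsmul t m hvA

def latticeEmbAddHom (n : ℕ) : (Fin n → ℤ) →+ (Fin n → ℝ) :=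
  (Int.castAddHom ℝ).compLeft (Fin n)

theorem coe_latticeEmbAddHom (n : ℕ) : ⇑(latticeEmbAddHom n) = latticeEmb n := rfl

theorem latticeEmb_eq (n : ℕ) :
    latticeEmb n = fun x ↦ algebraMap ℚ ℝ ∘ ((↑) ∘ x : Fin n → ℚ) := by
  funext x i
  simp [latticeEmb]

theorem exists_nsmul_mem_nsmul_of_latticeEmb_mem_convexHull {n : ℕ} {A : Finset (Fin n → ℤ)}
    {x : Fin n → ℤ} (hx : latticeEmb n x ∈ convexHull ℝ (latticeEmb n '' A)) :
    ∃ d : ℕ, 0 < d ∧ d • x ∈ d • A := by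
  refine exists_nsmul_mem_nsmul_of_intCast_mem_convexHull
    (mem_convexHull_of_algebraMap_mem_convexHull (𝕜 := ℝ) ?_)
  simpa only [Set.image_image, latticeEmb_eq] using hx

theorem analogous_iff_convexHull_eq_general (n : ℕ) (A B : Finset (Fin n → ℤ))
    (hA : A.Nonempty) :
    (∃ C : Finset (Fin n → ℤ), C.Nonempty ∧ A + C = B + C) ↔
      convexHull ℝ (latticeEmb n '' ↑A) = convexHull ℝ (latticeEmb n '' ↑B) := by
  constructor
  · rintro ⟨C, hC, hABC⟩
    refine convexHull_eq_of_add_eq_add (C := latticeEmb n '' ↑C) (A.finite_toSet.image _)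
      (B.finite_toSet.image _) (C.finite_toSet.image _).isCompact (hC.to_set.image _) ?_
    simp only [← coe_latticeEmbAddHom, ← Set.image_add, ← Finset.coe_add, hABC]
  · intro hAB
    have hM : latticeEmb n '' ↑(A ∪ B) ⊆ convexHull ℝ (latticeEmb n '' ↑A) := by
      rw [Finset.coe_union, Set.image_union]
      exact Set.union_subset (subset_convexHull ℝ _) (hAB ▸ subset_convexHull ℝ _)
    choose! d hd_pos hd using fun m (hm : m ∈ A ∪ B) ↦
      exists_nsmul_mem_nsmul_of_latticeEmb_mem_convexHull (hM (Set.mem_image_of_mem _ hm))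
    choose! e he_pos he using fun m (hm : m ∈ A ∪ B) ↦
      exists_nsmul_mem_nsmul_of_latticeEmb_mem_convexHull
        (hAB ▸ hM (Set.mem_image_of_mem _ hm))
    refine ⟨(∑ m ∈ A ∪ B, (d m + e m)) • (A ∪ B), (hA.mono Finset.subset_union_left).nsmul,
      ?_⟩
    rw [Finset.add_nsmul_eq_succ_nsmul Finset.subset_union_left hd_pos hd,
      Finset.add_nsmul_eq_succ_nsmul Finset.subset_union_right he_pos he]
    · exact Finset.sum_le_sum fun m _ ↦ Nat.le_add_left _ _
    · exact Finset.sum_le_sum fun m _ ↦ Nat.le_add_right _ _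

/-- Two finite nonempty subsets `A, B ⊆ ℤⁿ` are analogous in the semigroup of finite
nonempty subsets of `ℤⁿ` with Minkowski addition (i.e. `A + C = B + C` for some finite
nonempty `C`) if and only if their convex hulls in `ℝⁿ` coincide. -/
theorem analogous_iff_convexHull_eq (n : ℕ) (A B : Finset (Fin n → ℤ))
    (hA : A.Nonempty) (hB : B.Nonempty) :
    (∃ C : Finset (Fin n → ℤ), C.Nonempty ∧ A + C = B + C) ↔
      convexHull ℝ (latticeEmb n '' ↑A) = convexHull ℝ (latticeEmb n '' ↑B) :=
  analogous_iff_convexHull_eq_general n A B hA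
end

section
/- Let $\mathcal{K}_0$ be a set of finite nonempty subsets of $\mathbb{Z}^n$ equipped with a commutative, associative binary operation $\tilde{+}$ under which $\mathcal{K}_0$ is closed, and assume: (1) if $A \in \mathcal{K}_0$ then $\Delta(A) \cap \mathbb{Z}^n \in \mathcal{K}_0$; (2) for all $A, B \in \mathcal{K}_0$, $A + B \subseteq A \,\tilde{+}\, B$ (where $+$ is Minkowski sum); (3) for all $A, B \in \mathcal{K}_0$, $\Delta(A \,\tilde{+}\, B) = \Delta(A + B)$. Then for $A, B \in \mathcal{K}_0$, there exists $C \in \mathcal{K}_0$ with $A \,\tilde{+}\, C = B \,\tilde{+}\, C$ if and only if $\Delta(A) = \Delta(B)$. -/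
open Pointwise Finset

/-- The Newton polytope of a finite set `A ⊆ ℤⁿ`: the convex hull of `A` in `ℝⁿ`. -/
def newtonPolytope (n : ℕ) (A : Finset (Fin n → ℤ)) : Set (Fin n → ℝ) :=
  convexHull ℝ (latticeEmb n '' ↑A)

section ConvexGeometry

variable {E : Type*}

lemma mem_smul_convexHull_iff [AddCommGroup E] [Module ℝ E] {t : Finset E} {s : ℝ}
    (hs : 0 < s) {x : E} :
    x ∈ s • convexHull ℝ (t : Set E) ↔
      ∃ w : E → ℝ, (∀ y ∈ t, 0 ≤ w y) ∧ ∑ y ∈ t, w y = s ∧ ∑ y ∈ t, w y • y = x := by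
  rw [Set.mem_smul_set_iff_inv_smul_mem₀ hs.ne', Finset.mem_convexHull']
  constructor
  · rintro ⟨w, hw₀, hw₁, hwx⟩
    refine ⟨fun y => s * w y, fun y hy => mul_nonneg hs.le (hw₀ y hy), ?_, ?_⟩
    · rw [← Finset.mul_sum, hw₁, mul_one]
    · simp_rw [mul_smul, ← Finset.smul_sum, hwx, smul_inv_smul₀ hs.ne']
  · rintro ⟨w, hw₀, hws, hwx⟩
    refine ⟨fun y => s⁻¹ * w y, fun y hy => mul_nonneg (inv_nonneg.2 hs.le) (hw₀ y hy), ?_, ?_⟩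
    · rw [← Finset.mul_sum, hws, inv_mul_cancel₀ hs.ne']
    · simp_rw [mul_smul, ← Finset.smul_sum, hwx]

/-- Pigeonhole: with `#t ≤ s + 1`, some vertex `y` carries weight at least `1` in `x`;
removing one unit of that weight leaves a point of `s • conv t`. -/
lemma exists_sub_mem_smul_convexHull [AddCommGroup E] [Module ℝ E] {t : Finset E} {s : ℝ}
    (hs : 0 < s) (hcard : (#t : ℝ) ≤ s + 1) {x : E}
    (hx : x ∈ (s + 1) • convexHull ℝ (t : Set E)) :
    ∃ y ∈ t, x - y ∈ s • convexHull ℝ (t : Set E) := by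
  classical
  obtain ⟨w, hw₀, hws, hwx⟩ := (mem_smul_convexHull_iff (by linarith)).1 hx
  obtain ⟨y₀, hy₀, hw₁⟩ : ∃ y ∈ t, 1 ≤ w y := by
    by_contra! hlt
    have ht : t.Nonempty := Finset.nonempty_of_sum_ne_zero (by rw [hws]; linarith)
    have := Finset.sum_lt_sum_of_nonempty ht hlt
    simp only [Finset.sum_const, nsmul_eq_mul, mul_one] at this
    linarith
  refine ⟨y₀, hy₀, (mem_smul_convexHull_iff hs).2
    ⟨fun y => w y - if y = y₀ then 1 else 0, fun y hy => ?_, ?_, ?_⟩⟩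
  · dsimp only
    split_ifs with h
    · subst h; linarith
    · simpa using hw₀ y hy
  · rw [Finset.sum_sub_distrib, hws, Finset.sum_ite_eq' t y₀, if_pos hy₀, add_sub_cancel_right]
  · simp_rw [sub_smul, Finset.sum_sub_distrib, hwx, ite_smul, one_smul, zero_smul,
      Finset.sum_ite_eq' t y₀, if_pos hy₀]

/-- Cancellation law for Minkowski sums: iterating gives `j • K + M ⊆ j • L + M`, so every
`k ∈ K` lies within `diam M / j` of `L`. -/
lemma Convex.subset_of_add_subset_add [SeminormedAddCommGroup E] [NormedSpace ℝ E]
    {K L M : Set E} (hL : Convex ℝ L) (hLc : IsClosed L) (hM : M.Nonempty)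
    (hMb : Bornology.IsBounded M) (h : K + M ⊆ L + M) : K ⊆ L := by
  have hiter : ∀ j : ℕ, ((j : ℝ) + 1) • K + M ⊆ ((j : ℝ) + 1) • L + M := by
    intro j
    induction j with
    | zero => simpa using h
    | succ j ih =>
      push_cast
      calc ((j : ℝ) + 1 + 1) • K + M ⊆ ((j + 1 : ℝ) • K + (1 : ℝ) • K) + M :=
            Set.add_subset_add_right (Set.add_smul_subset _ _ _)
        _ = (j + 1 : ℝ) • K + (K + M) := by rw [one_smul, add_assoc]
        _ ⊆ (j + 1 : ℝ) • K + (L + M) := Set.add_subset_add_left h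
        _ = L + ((j + 1 : ℝ) • K + M) := add_left_comm _ _ _
        _ ⊆ L + ((j + 1 : ℝ) • L + M) := Set.add_subset_add_left ih
        _ = ((j : ℝ) + 1 + 1) • L + M := by
          rw [hL.add_smul (p := (j : ℝ) + 1) (by positivity) zero_le_one, one_smul, add_left_comm,
            ← add_assoc]
  obtain ⟨m₀, hm₀⟩ := hM
  obtain ⟨R, hR⟩ := isBounded_iff_forall_norm_le.1 hMb
  intro k hk
  rw [← hLc.closure_eq, Metric.mem_closure_iff]
  intro ε hε
  obtain ⟨j, hj⟩ := exists_nat_gt (2 * R / ε)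
  obtain ⟨_, ⟨l, hl, rfl⟩, m, hm, hsum⟩ :=
    hiter j (Set.add_mem_add (Set.smul_mem_smul_set hk) hm₀)
  refine ⟨l, hl, ?_⟩
  have hkl : ((j : ℝ) + 1) • (k - l) = m - m₀ := by
    rw [smul_sub, sub_eq_sub_iff_add_eq_add, ← hsum]
    exact add_comm _ _
  have hnorm : ((j : ℝ) + 1) * ‖k - l‖ ≤ 2 * R := by
    rw [← abs_of_pos (by positivity : (0 : ℝ) < j + 1), ← Real.norm_eq_abs, ← norm_smul, hkl]
    linarith [norm_sub_le m m₀, hR m hm, hR m₀ hm₀]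
  rw [div_lt_iff₀ hε] at hj
  rw [dist_eq_norm]
  nlinarith [norm_nonneg (k - l)]

end ConvexGeometry

section NewtonPolytope

variable {n : ℕ}

def latticeHom (n : ℕ) : (Fin n → ℤ) →+ (Fin n → ℝ) := (Int.castAddHom ℝ).compLeft (Fin n)

lemma coe_latticeHom : ⇑(latticeHom n) = latticeEmb n := rfl

lemma isometry_latticeEmb : Isometry (latticeEmb n) := Real.isometry_intCast.postcomp_pi

def latticePoints (n : ℕ) (P : Set (Fin n → ℝ)) : Set (Fin n → ℤ) := latticeEmb n ⁻¹' P

lemma Bornology.IsBounded.finite_latticePoints {P : Set (Fin n → ℝ)} (hP : IsBounded P) :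
    (latticePoints n P).Finite :=
  (Metric.isCompact_of_isClosed_isBounded (isClosed_discrete _)
    (isometry_latticeEmb.antilipschitz.isBounded_preimage hP)).finite_of_discrete

lemma convex_newtonPolytope (A : Finset (Fin n → ℤ)) : Convex ℝ (newtonPolytope n A) :=
  convex_convexHull ℝ _

lemma isCompact_newtonPolytope (A : Finset (Fin n → ℤ)) : IsCompact (newtonPolytope n A) :=
  (A.finite_toSet.image _).isCompact_convexHull ℝ

lemma latticeEmb_mem_newtonPolytope {A : Finset (Fin n → ℤ)} {a : Fin n → ℤ} (ha : a ∈ A) :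
    latticeEmb n a ∈ newtonPolytope n A :=
  subset_convexHull ℝ _ ⟨a, ha, rfl⟩

lemma newtonPolytope_nonempty {A : Finset (Fin n → ℤ)} (hA : A.Nonempty) :
    (newtonPolytope n A).Nonempty :=
  let ⟨_, ha⟩ := hA; ⟨_, latticeEmb_mem_newtonPolytope ha⟩

lemma newtonPolytope_eq_convexHull_image [DecidableEq (Fin n → ℝ)] (A : Finset (Fin n → ℤ)) :
    newtonPolytope n A = convexHull ℝ ↑(A.image (latticeEmb n)) := by
  rw [newtonPolytope, Finset.coe_image]

lemma newtonPolytope_add (A B : Finset (Fin n → ℤ)) :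
    newtonPolytope n (A + B) = newtonPolytope n A + newtonPolytope n B := by
  rw [newtonPolytope, Finset.coe_add, ← coe_latticeHom, Set.image_add, convexHull_add]
  rfl

lemma newtonPolytope_subset_iff {A : Finset (Fin n → ℤ)} {P : Set (Fin n → ℝ)}
    (hP : Convex ℝ P) : newtonPolytope n A ⊆ P ↔ (A : Set (Fin n → ℤ)) ⊆ latticePoints n P := by
  rw [newtonPolytope, hP.convexHull_subset_iff, Set.image_subset_iff, latticePoints]

lemma coe_eq_latticePoints_smul_of_add_subset {X Z W : Finset (Fin n → ℤ)} {s : ℝ} (hs : 0 < s)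
    (hcard : (#X : ℝ) ≤ s + 1)
    (hZ : (Z : Set (Fin n → ℤ)) = latticePoints n (s • newtonPolytope n X))
    (hW : X + Z ⊆ W) (hΔ : newtonPolytope n W ⊆ newtonPolytope n X + newtonPolytope n Z) :
    (W : Set (Fin n → ℤ)) = latticePoints n ((s + 1) • newtonPolytope n X) := by
  classical
  have hconv := convex_newtonPolytope X
  apply subset_antisymm
  · rw [← newtonPolytope_subset_iff (hconv.smul _), add_comm s, hconv.add_smul zero_le_one hs.le,
      one_smul]
    exact hΔ.trans (Set.add_subset_add_left
      ((newtonPolytope_subset_iff (hconv.smul _)).2 hZ.le))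
  · intro z hz
    rw [latticePoints, Set.mem_preimage, newtonPolytope_eq_convexHull_image] at hz
    obtain ⟨_, hy, hzy⟩ := exists_sub_mem_smul_convexHull hs
      (le_trans (by exact_mod_cast Finset.card_image_le) hcard) hz
    obtain ⟨a, ha, rfl⟩ := Finset.mem_image.1 hy
    rw [← coe_latticeHom, ← map_sub, coe_latticeHom, ← newtonPolytope_eq_convexHull_image] at hzy
    have hza : z - a ∈ Z := by
      rw [← Finset.mem_coe, hZ]
      exact hzy
    exact hW (Finset.mem_add.2 ⟨a, ha, z - a, hza, add_sub_cancel a z⟩)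

end NewtonPolytope

lemma exists_newtonPolytope_eq_smul {n : ℕ} {K₀ : Set (Finset (Fin n → ℤ))}
    {op : Finset (Fin n → ℤ) → Finset (Fin n → ℤ) → Finset (Fin n → ℤ)}
    (hclosed : ∀ A ∈ K₀, ∀ B ∈ K₀, op A B ∈ K₀)
    (h3 : ∀ A ∈ K₀, ∀ B ∈ K₀, newtonPolytope n (op A B) = newtonPolytope n (A + B))
    {X : Finset (Fin n → ℤ)} (hX : X ∈ K₀) (m : ℕ) :
    ∃ Y ∈ K₀, newtonPolytope n Y = ((m : ℝ) + 1) • newtonPolytope n X := by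
  induction m with
  | zero => exact ⟨X, hX, by simp⟩
  | succ m ih =>
    obtain ⟨Y, hY, hYX⟩ := ih
    refine ⟨op Y X, hclosed Y hY X hX, ?_⟩
    rw [h3 Y hY X hX, newtonPolytope_add, hYX, Nat.cast_succ,
      (convex_newtonPolytope X).add_smul (p := (m : ℝ) + 1) (by positivity) zero_le_one, one_smul]

theorem analogous_iff_newtonPolytope_eq_general (n : ℕ) (K₀ : Set (Finset (Fin n → ℤ)))
    (op : Finset (Fin n → ℤ) → Finset (Fin n → ℤ) → Finset (Fin n → ℤ))
    (hne : ∀ A ∈ K₀, A.Nonempty)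
    (hclosed : ∀ A ∈ K₀, ∀ B ∈ K₀, op A B ∈ K₀)
    (h1 : ∀ A ∈ K₀, ∀ A' : Finset (Fin n → ℤ),
      (↑A' : Set (Fin n → ℤ)) = {k | latticeEmb n k ∈ newtonPolytope n A} → A' ∈ K₀)
    (h2 : ∀ A ∈ K₀, ∀ B ∈ K₀, A + B ⊆ op A B)
    (h3 : ∀ A ∈ K₀, ∀ B ∈ K₀, newtonPolytope n (op A B) = newtonPolytope n (A + B))
    (A : Finset (Fin n → ℤ)) (hA : A ∈ K₀) (B : Finset (Fin n → ℤ)) (hB : B ∈ K₀) :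
    (∃ C ∈ K₀, op A C = op B C) ↔ newtonPolytope n A = newtonPolytope n B := by
  constructor
  · rintro ⟨C, hC, hAC⟩
    have hsum :
        newtonPolytope n A + newtonPolytope n C = newtonPolytope n B + newtonPolytope n C := by
      rw [← newtonPolytope_add, ← newtonPolytope_add, ← h3 A hA C hC, ← h3 B hB C hC, hAC]
    have cancel {X Y : Finset (Fin n → ℤ)}
        (h : newtonPolytope n X + newtonPolytope n C ⊆ newtonPolytope n Y + newtonPolytope n C) :
        newtonPolytope n X ⊆ newtonPolytope n Y :=
      (convex_newtonPolytope Y).subset_of_add_subset_add (isCompact_newtonPolytope Y).isClosed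
        (newtonPolytope_nonempty (hne C hC)) (isCompact_newtonPolytope C).isBounded h
    exact (cancel hsum.le).antisymm (cancel hsum.ge)
  · intro hAB
    set m := #A + #B
    obtain ⟨Y, hY, hYA⟩ := exists_newtonPolytope_eq_smul hclosed h3 hA m
    have hfin := (isCompact_newtonPolytope Y).isBounded.finite_latticePoints
    set Z := hfin.toFinset
    have hZK : Z ∈ K₀ := h1 Y hY Z hfin.coe_toFinset
    have hZ : (Z : Set (Fin n → ℤ)) = latticePoints n (((m : ℝ) + 1) • newtonPolytope n A) := by
      rw [hfin.coe_toFinset, hYA]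
    have hop {X : Finset (Fin n → ℤ)} (hX : X ∈ K₀) (hXA : newtonPolytope n X = newtonPolytope n A)
        (hcard : #X ≤ m + 2) :
        (op X Z : Set (Fin n → ℤ)) = latticePoints n (((m : ℝ) + 1 + 1) • newtonPolytope n A) := by
      rw [← hXA] at hZ ⊢
      exact coe_eq_latticePoints_smul_of_add_subset (by positivity)
        (by rw [add_assoc, one_add_one_eq_two]; exact_mod_cast hcard) hZ
        (h2 X hX Z hZK) (by rw [h3 X hX Z hZK, newtonPolytope_add])
    refine ⟨Z, hZK, Finset.coe_injective ?_⟩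
    rw [hop hA rfl (by omega), hop hB hAB.symm (by omega)]

/-- Let `K₀` be a collection of finite nonempty subsets of `ℤⁿ` which is a commutative
semigroup under an operation `+̃` such that (1) `K₀` contains the set of integral points of
the Newton polytope of each of its members, (2) `A + B ⊆ A +̃ B` (Minkowski sum), and
(3) `Δ(A +̃ B) = Δ(A + B)`.  Then `A, B ∈ K₀` are analogous in `(K₀, +̃)` if and only if
their Newton polytopes coincide. -/
theorem analogous_iff_newtonPolytope_eq (n : ℕ) (K₀ : Set (Finset (Fin n → ℤ)))
    (op : Finset (Fin n → ℤ) → Finset (Fin n → ℤ) → Finset (Fin n → ℤ))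
    (hne : ∀ A ∈ K₀, A.Nonempty)
    (hclosed : ∀ A ∈ K₀, ∀ B ∈ K₀, op A B ∈ K₀)
    (hcomm : ∀ A ∈ K₀, ∀ B ∈ K₀, op A B = op B A)
    (hassoc : ∀ A ∈ K₀, ∀ B ∈ K₀, ∀ C ∈ K₀, op (op A B) C = op A (op B C))
    (h1 : ∀ A ∈ K₀, ∀ A' : Finset (Fin n → ℤ),
      (↑A' : Set (Fin n → ℤ)) = {k | latticeEmb n k ∈ newtonPolytope n A} → A' ∈ K₀)
    (h2 : ∀ A ∈ K₀, ∀ B ∈ K₀, A + B ⊆ op A B)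
    (h3 : ∀ A ∈ K₀, ∀ B ∈ K₀, newtonPolytope n (op A B) = newtonPolytope n (A + B))
    (A : Finset (Fin n → ℤ)) (hA : A ∈ K₀) (B : Finset (Fin n → ℤ)) (hB : B ∈ K₀) :
    (∃ C ∈ K₀, op A C = op B C) ↔ newtonPolytope n A = newtonPolytope n B :=
  analogous_iff_newtonPolytope_eq_general n K₀ op hne hclosed h1 h2 h3 A hA B hB
end

section
/- Let $\Delta \subseteq \mathbb{R}^n$ be a nonempty compact convex set. Then $\lim_{k \to \infty} \#(k\Delta \cap \mathbb{Z}^n)/k^n = \mathrm{Vol}(\Delta)$, where $k\Delta = \{kx \mid x \in \Delta\}$, $\#$ denotes cardinality, and $\mathrm{Vol}$ is the $n$-dimensional Lebesgue measure. -/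
/-!
Scaling by `k` identifies `kΔ ∩ ℤⁿ` with `Δ ∩ k⁻¹ℤⁿ`, so the count divided by `kⁿ` is a Riemann
sum of the indicator of `Δ` over the grid `k⁻¹ℤⁿ`. These converge to `Vol Δ` because `Δ` is
bounded and measurable and, being convex, has a Lebesgue-null frontier.
-/

open Pointwise MeasureTheory Filter

theorem intPts_eq_span (n : ℕ) :
    intPts n = Submodule.span ℤ (Set.range (Pi.basisFun ℝ (Fin n))) := by
  ext x
  simp only [SetLike.mem_coe, (Pi.basisFun ℝ (Fin n)).mem_span_iff_repr_mem ℤ, Pi.basisFun_repr,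
    intPts, Set.mem_range, algebraMap_int_eq, eq_intCast]
  refine ⟨?_, fun h => ?_⟩
  · rintro ⟨m, rfl⟩ i
    exact ⟨m i, rfl⟩
  · choose m hm using h
    exact ⟨m, funext hm⟩

theorem Set.natCard_smul_set_inter₀ {G α : Type*} [GroupWithZero G] [MulAction G α] {a : G}
    (ha : a ≠ 0) (s t : Set α) : Nat.card ↥(a • s ∩ t) = Nat.card ↥(s ∩ a⁻¹ • t) := by
  rw [← Nat.card_image_of_injective (MulAction.injective₀ ha) (s ∩ a⁻¹ • t), Set.image_smul,
    Set.smul_set_inter₀ ha, smul_inv_smul₀ ha]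

theorem lattice_point_count_tendsto_volume_general (n : ℕ) (Δ : Set (Fin n → ℝ))
    (hcp : IsCompact Δ) (hcv : Convex ℝ Δ) :
    Tendsto (fun k : ℕ =>
        (Nat.card ↥(((k : ℝ) • Δ) ∩ intPts n) : ℝ) / (k : ℝ) ^ n)
      atTop (nhds (volume Δ).toReal) := by
  have hsum := tendsto_card_div_pow_atTop_volume Δ hcp.isBounded hcp.isClosed.measurableSet
    (hcv.addHaar_frontier volume)
  rw [Fintype.card_fin] at hsum
  refine hsum.congr' ?_
  filter_upwards [eventually_ge_atTop 1] with k hk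
  rw [Set.natCard_smul_set_inter₀ (by positivity), intPts_eq_span]

/-- For a nonempty compact convex `Δ ⊆ ℝⁿ`, the number of lattice points in the dilate
`kΔ` divided by `kⁿ` tends to the volume of `Δ` as `k → ∞`. -/
theorem lattice_point_count_tendsto_volume (n : ℕ) (Δ : Set (Fin n → ℝ))
    (hne : Δ.Nonempty) (hcp : IsCompact Δ) (hcv : Convex ℝ Δ) :
    Tendsto (fun k : ℕ =>
        (Nat.card ↥(((k : ℝ) • Δ) ∩ intPts n) : ℝ) / (k : ℝ) ^ n)
      atTop (nhds (volume Δ).toReal) :=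
  lattice_point_count_tendsto_volume_general n Δ hcp hcv
end

section
/- Let $\Delta \subseteq \mathbb{R}^n$ be a nonempty compact convex set, let $F$ be a real polynomial function on $\mathbb{R}^n$ of degree at most $p$, and let $\phi$ be the homogeneous component of $F$ of degree $p$. Then $\lim_{k \to \infty} k^{-(n+p)} \sum_{\lambda \in (k\Delta) \cap \mathbb{Z}^n} F(\lambda) = \int_\Delta \phi \, d\mu$, where $d\mu$ is the Lebesgue measure on $\mathbb{R}^n$. -/
/-! Split `F` into its homogeneous components `φ_d`, `d ≤ p`. By homogeneity,
`k^{-(n+d)} ∑_{λ ∈ kΔ ∩ ℤⁿ} φ_d(λ) = k^{-n} ∑_{x ∈ Δ ∩ k⁻¹ℤⁿ} φ_d(x)`, a Riemann sum of `φ_d` on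
the grid of mesh `1/k`; it converges to `∫_Δ φ_d` because the frontier of a convex set is
Lebesgue-null. Dividing by `k^{n+p}` instead therefore kills every component with `d < p`. -/

open Pointwise MeasureTheory Filter

open MvPolynomial Bornology Submodule

namespace MvPolynomial

variable {σ R : Type*} [CommSemiring R]

theorem IsHomogeneous.eval_smul {φ : MvPolynomial σ R} {d : ℕ} (hφ : φ.IsHomogeneous d)
    (c : R) (x : σ → R) : eval (c • x) φ = c ^ d * eval x φ := by
  rw [eval_eq, eval_eq, Finset.mul_sum]
  refine Finset.sum_congr rfl fun m hm ↦ ?_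
  have hdeg : ∑ i ∈ m.support, m i = d := by
    simpa [Finsupp.weight_apply, Finsupp.sum] using hφ (mem_support_iff.mp hm)
  simp only [Pi.smul_apply, smul_eq_mul, mul_pow, Finset.prod_mul_distrib,
    Finset.prod_pow_eq_pow_sum, hdeg]
  ring

theorem sum_homogeneousComponent_of_totalDegree_le {φ : MvPolynomial σ R} {p : ℕ}
    (h : φ.totalDegree ≤ p) : ∑ i ∈ Finset.range (p + 1), homogeneousComponent i φ = φ := by
  conv_rhs => rw [← sum_homogeneousComponent φ]
  refine (Finset.sum_subset (Finset.range_subset_range.mpr (by omega)) fun i _ hi ↦ ?_).symm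
  exact homogeneousComponent_eq_zero _ _ (by simp only [Finset.mem_range, not_lt] at hi; omega)

end MvPolynomial

theorem finsum_mem_finset_sum_comm {α β M : Type*} [AddCommMonoid M] {s : Set α} (hs : s.Finite)
    (t : Finset β) (f : β → α → M) :
    ∑ᶠ a ∈ s, ∑ b ∈ t, f b a = ∑ b ∈ t, ∑ᶠ a ∈ s, f b a := by
  simp only [finsum_mem_eq_finite_toFinset_sum _ hs]
  exact Finset.sum_comm

section LatticePoints

variable {n : ℕ}

local notation "L" => span ℤ (Set.range (Pi.basisFun ℝ (Fin n)))

theorem latticeEmb_injective : (latticeEmb n).Injective :=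
  fun _ _ h ↦ by ext i; exact Int.cast_injective (congrFun h i)

theorem range_latticeEmb : Set.range (latticeEmb n) = L := by
  ext x
  simp only [SetLike.mem_coe, (Pi.basisFun ℝ (Fin n)).mem_span_iff_repr_mem ℤ, Pi.basisFun_repr,
    algebraMap_int_eq, eq_intCast, Set.mem_range]
  exact ⟨fun ⟨m, hm⟩ i ↦ ⟨m i, congrFun hm i⟩,
    fun h ↦ ⟨fun i ↦ (h i).choose, by ext i; exact (h i).choose_spec⟩⟩

theorem finite_setOf_latticeEmb_mem {s : Set (Fin n → ℝ)} (hs : IsBounded s) :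
    {m | latticeEmb n m ∈ s}.Finite := by
  refine ((ZSpan.setFinite_inter (Pi.basisFun ℝ (Fin n)) hs).preimage
    latticeEmb_injective.injOn).subset fun m hm ↦ ?_
  exact ⟨hm, range_latticeEmb ▸ Set.mem_range_self m⟩

theorem tsum_inter_inv_smul_eq_finsum {s : Set (Fin n → ℝ)} (hs : IsBounded s) {c : ℝ}
    (hc : c ≠ 0) (f : (Fin n → ℝ) → ℝ) :
    ∑' x : ↑(s ∩ c⁻¹ • (L : Set (Fin n → ℝ))), f x =
      ∑ᶠ m ∈ {m | latticeEmb n m ∈ c • s}, f (c⁻¹ • latticeEmb n m) := by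
  have himage : (fun m ↦ c⁻¹ • latticeEmb n m) '' {m | latticeEmb n m ∈ c • s} =
      s ∩ c⁻¹ • (L : Set (Fin n → ℝ)) := by
    ext x
    simp only [Set.mem_image, Set.mem_ofPred_eq, Set.mem_inter_iff, Set.mem_inv_smul_set_iff₀ hc,
      ← range_latticeEmb, Set.mem_range]
    constructor
    · rintro ⟨m, hm, rfl⟩
      rw [smul_inv_smul₀ hc]
      exact ⟨(Set.mem_smul_set_iff_inv_smul_mem₀ hc _ _).mp hm, m, rfl⟩
    · rintro ⟨hx, m, hm⟩
      exact ⟨m, hm ▸ Set.smul_mem_smul_set hx, by rw [hm, inv_smul_smul₀ hc]⟩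
  have hfin : (s ∩ c⁻¹ • (L : Set (Fin n → ℝ))).Finite :=
    himage ▸ (finite_setOf_latticeEmb_mem (hs.smul₀ c)).image _
  have hinj : Set.InjOn (fun m ↦ c⁻¹ • latticeEmb n m) {m | latticeEmb n m ∈ c • s} :=
    ((smul_right_injective _ (inv_ne_zero hc)).comp latticeEmb_injective).injOn
  rw [← finsum_mem_image hinj, himage, tsum_subtype, tsum_eq_finsum, finsum_mem_def]
  exact hfin.subset Set.support_indicator_subset

theorem tendsto_finsum_latticePoints_div_pow {s : Set (Fin n → ℝ)} (hs : IsBounded s)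
    (hsm : MeasurableSet s) (hfr : volume (frontier s) = 0) {f : (Fin n → ℝ) → ℝ}
    (hf : Continuous f) :
    Tendsto (fun k : ℕ ↦
        (∑ᶠ m ∈ {m | latticeEmb n m ∈ (k : ℝ) • s}, f ((k : ℝ)⁻¹ • latticeEmb n m)) / (k : ℝ) ^ n)
      atTop (nhds (∫ x in s, f x)) := by
  refine (tendsto_tsum_div_pow_atTop_integral s f hf hs hsm hfr).congr'
    ((eventually_ne_atTop 0).mono fun k hk ↦ ?_)
  rw [tsum_inter_inv_smul_eq_finsum hs (Nat.cast_ne_zero.mpr hk), Fintype.card_fin]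

variable {s : Set (Fin n → ℝ)} {φ : MvPolynomial (Fin n) ℝ} {d : ℕ}

theorem tendsto_finsum_eval_div_pow_of_isHomogeneous (hs : IsBounded s)
    (hsm : MeasurableSet s) (hfr : volume (frontier s) = 0) (hφ : φ.IsHomogeneous d) :
    Tendsto (fun k : ℕ ↦
        (∑ᶠ m ∈ {m | latticeEmb n m ∈ (k : ℝ) • s}, eval (latticeEmb n m) φ) / (k : ℝ) ^ (n + d))
      atTop (nhds (∫ x in s, eval x φ)) := by
  refine (tendsto_finsum_latticePoints_div_pow hs hsm hfr (continuous_eval φ)).congr'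
    ((eventually_ne_atTop 0).mono fun k hk ↦ ?_)
  have hk' : (k : ℝ) ≠ 0 := Nat.cast_ne_zero.mpr hk
  have hsum : ∑ᶠ m ∈ {m | latticeEmb n m ∈ (k : ℝ) • s}, eval (latticeEmb n m) φ =
      (k : ℝ) ^ d * ∑ᶠ m ∈ {m | latticeEmb n m ∈ (k : ℝ) • s},
        eval ((k : ℝ)⁻¹ • latticeEmb n m) φ := by
    rw [mul_finsum_mem]
    exact finsum_mem_congr rfl fun m _ ↦ by rw [← hφ.eval_smul, smul_inv_smul₀ hk']
  dsimp only
  rw [hsum, pow_add, mul_comm ((k : ℝ) ^ n), ← div_div,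
    mul_div_cancel_left₀ _ (pow_ne_zero _ hk')]

theorem tendsto_finsum_eval_div_pow_of_isHomogeneous_of_lt (hs : IsBounded s)
    (hsm : MeasurableSet s) (hfr : volume (frontier s) = 0) (hφ : φ.IsHomogeneous d) {p : ℕ}
    (hdp : d < p) :
    Tendsto (fun k : ℕ ↦
        (∑ᶠ m ∈ {m | latticeEmb n m ∈ (k : ℝ) • s}, eval (latticeEmb n m) φ) / (k : ℝ) ^ (n + p))
      atTop (nhds 0) := by
  have hinv : Tendsto (fun k : ℕ ↦ ((k : ℝ) ^ (p - d))⁻¹) atTop (nhds 0) :=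
    tendsto_inv_atTop_zero.comp
      ((tendsto_pow_atTop (by omega)).comp tendsto_natCast_atTop_atTop)
  have hlim := (tendsto_finsum_eval_div_pow_of_isHomogeneous hs hsm hfr hφ).mul hinv
  rw [mul_zero] at hlim
  refine hlim.congr fun k ↦ ?_
  rw [← div_eq_mul_inv, div_div, ← pow_add, show n + d + (p - d) = n + p by omega]

end LatticePoints

theorem sum_over_lattice_points_tendsto_integral_general (n p : ℕ) (Δ : Set (Fin n → ℝ))
    (hcp : IsCompact Δ) (hcv : Convex ℝ Δ)
    (F : MvPolynomial (Fin n) ℝ) (hF : F.totalDegree ≤ p) :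
    Tendsto (fun k : ℕ =>
        (∑ᶠ m ∈ {m : Fin n → ℤ | latticeEmb n m ∈ (k : ℝ) • Δ},
          MvPolynomial.eval (latticeEmb n m) F) / (k : ℝ) ^ (n + p))
      atTop
      (nhds (∫ x in Δ, MvPolynomial.eval x (MvPolynomial.homogeneousComponent p F))) := by
  have hbd : IsBounded Δ := hcp.isBounded
  have hms : MeasurableSet Δ := hcp.isClosed.measurableSet
  have hfr : volume (frontier Δ) = 0 := hcv.addHaar_frontier volume
  have hsplit : ∀ k : ℕ, ∑ᶠ m ∈ {m | latticeEmb n m ∈ (k : ℝ) • Δ}, eval (latticeEmb n m) F =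
      ∑ d ∈ Finset.range (p + 1), ∑ᶠ m ∈ {m | latticeEmb n m ∈ (k : ℝ) • Δ},
        eval (latticeEmb n m) (homogeneousComponent d F) := fun k ↦ by
    rw [← finsum_mem_finset_sum_comm (finite_setOf_latticeEmb_mem (hbd.smul₀ _))]
    simp only [← map_sum, sum_homogeneousComponent_of_totalDegree_le hF]
  simp only [hsplit, Finset.sum_range_succ, add_div, Finset.sum_div]
  have hlower := tendsto_finsetSum (Finset.range p) fun d hd ↦
    tendsto_finsum_eval_div_pow_of_isHomogeneous_of_lt hbd hms hfr
      (homogeneousComponent_isHomogeneous d F) (Finset.mem_range.mp hd)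
  have htop := tendsto_finsum_eval_div_pow_of_isHomogeneous hbd hms hfr
    (homogeneousComponent_isHomogeneous p F)
  simpa only [Finset.sum_const_zero, zero_add] using hlower.add htop

/-- Let `Δ ⊆ ℝⁿ` be a nonempty compact convex set, `F` a real polynomial on `ℝⁿ` of degree
at most `p` and `φ` its homogeneous component of degree `p`.  Then
`k^{-(n+p)} ∑_{λ ∈ kΔ ∩ ℤⁿ} F(λ) → ∫_Δ φ dμ` as `k → ∞`. -/
theorem sum_over_lattice_points_tendsto_integral (n p : ℕ) (Δ : Set (Fin n → ℝ))
    (hne : Δ.Nonempty) (hcp : IsCompact Δ) (hcv : Convex ℝ Δ)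
    (F : MvPolynomial (Fin n) ℝ) (hF : F.totalDegree ≤ p) :
    Tendsto (fun k : ℕ =>
        (∑ᶠ m ∈ {m : Fin n → ℤ | latticeEmb n m ∈ (k : ℝ) • Δ},
          MvPolynomial.eval (latticeEmb n m) F) / (k : ℝ) ^ (n + p))
      atTop
      (nhds (∫ x in Δ, MvPolynomial.eval x (MvPolynomial.homogeneousComponent p F))) :=
  sum_over_lattice_points_tendsto_integral_general n p Δ hcp hcv F hF
end

section
/- For $\lambda = (\lambda_1, \dots, \lambda_n) \in \mathbb{R}^n$ with $\lambda_1 \geq \cdots \geq \lambda_n$, let $\Delta_{GC}(\lambda) \subseteq \mathbb{R}^{n(n-1)/2}$ be the Gelfand–Cetlin polytope: the set of triangular arrays $(x_{i,j})_{1 \le j \le i \le n-1}$ of real numbers satisfying the interlacing inequalities $x_{i+1,j} \geq x_{i,j} \geq x_{i+1,j+1}$ for $1 \le j \le i \le n-1$, where $x_{n,j} := \lambda_j$. Then the map $\lambda \mapsto \Delta_{GC}(\lambda)$ is linear: for any $\lambda, \gamma$ with decreasing coordinates and any $c_1, c_2 \geq 0$, one has $\Delta_{GC}(c_1\lambda +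 c_2\gamma) = c_1\Delta_{GC}(\lambda) + c_2\Delta_{GC}(\gamma)$, where the sum is the Minkowski sum and $c\Delta = \{cx \mid x \in \Delta\}$. -/
open Pointwise

/-- Index set for the free entries of a Gelfand–Cetlin pattern for `GL(n)`:
rows `i = 1, …, n-1` (encoded by `Fin (n-1)`, row `i` being index `i - 1`), row `i`
having entries `j = 1, …, i` (encoded by `Fin i`).  It has `n(n-1)/2` elements. -/
abbrev GCIndex (n : ℕ) := (i : Fin (n - 1)) × Fin (i.val + 1)

/-- The `(i, j)` entry (in `1`-based coordinates, `1 ≤ j ≤ i ≤ n - 1`) of the triangular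
array `x`, with the convention that row `n` is `λ`. -/
noncomputable def gcEntry (n : ℕ) (lam : ℕ → ℝ) (x : GCIndex n → ℝ) (i j : ℕ) : ℝ :=
  if h : 1 ≤ j ∧ j ≤ i ∧ i ≤ n - 1 then
    x ⟨⟨i - 1, by omega⟩, ⟨j - 1, by show j - 1 < i - 1 + 1; omega⟩⟩
  else if i = n then lam j else 0

/-- The Gelfand–Cetlin polytope `Δ_GC(λ) ⊆ ℝ^{n(n-1)/2}` of `λ = (λ₁ ≥ ⋯ ≥ λₙ)`: triangular
arrays `(x_{i,j})_{1 ≤ j ≤ i ≤ n-1}` with the interlacing inequalities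
`x_{i+1,j} ≥ x_{i,j} ≥ x_{i+1,j+1}` for `1 ≤ j ≤ i ≤ n-1`, where `x_{n,j} := λ_j`. -/
noncomputable def gcPolytope (n : ℕ) (lam : ℕ → ℝ) : Set (GCIndex n → ℝ) :=
  {x | ∀ i j, 1 ≤ j → j ≤ i → i ≤ n - 1 →
    gcEntry n lam x i j ≤ gcEntry n lam x (i + 1) j ∧
    gcEntry n lam x (i + 1) (j + 1) ≤ gcEntry n lam x i j}

noncomputable def decompRow (a b x : ℕ → ℝ) (j : ℕ) : ℝ :=
  min (b j) (max (b (j+1)) (x j - (a (j+1) - b (j+1))))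

lemma decompRow_spec (a b x : ℕ → ℝ) (i : ℕ)
    (hb : ∀ j, 1 ≤ j → j ≤ i → b (j+1) ≤ b j)
    (hc : ∀ j, 1 ≤ j → j ≤ i → a (j+1) - b (j+1) ≤ a j - b j)
    (hx1 : ∀ j, 1 ≤ j → j ≤ i → x j ≤ a j)
    (hx2 : ∀ j, 1 ≤ j → j ≤ i → a (j+1) ≤ x j) :
    ∀ j, 1 ≤ j → j ≤ i →
      b (j+1) ≤ decompRow a b x j ∧ decompRow a b x j ≤ b j ∧
      a (j+1) - b (j+1) ≤ x j - decompRow a b x j ∧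
      x j - decompRow a b x j ≤ a j - b j := by
  intro j h1 h2
  have hbb := hb j h1 h2
  have hcc := hc j h1 h2
  have hxa := hx1 j h1 h2
  have hax := hx2 j h1 h2
  unfold decompRow
  have hM : b (j+1) ≤ x j - (a (j+1) - b (j+1)) := by linarith
  rw [max_eq_right hM]
  have h5 : min (b j) (x j - (a (j+1) - b (j+1))) ≤ x j - (a (j+1) - b (j+1)) :=
    min_le_right _ _
  have h6 : min (b j) (x j - (a (j+1) - b (j+1))) ≤ b j := min_le_left _ _
  have h7 : x j - (a j - b j) ≤ min (b j) (x j - (a (j+1) - b (j+1))) :=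
    le_min (by linarith) (by linarith)
  exact ⟨le_min (by linarith) hM, h6, by linarith, by linarith⟩

noncomputable def Yaux (n : ℕ) (lam : ℕ → ℝ) (X : ℕ → ℕ → ℝ) : ℕ → ℕ → ℝ
  | 0 => lam
  | (k+1) => decompRow (X (n - k)) (Yaux n lam X k) (X (n - (k+1)))

noncomputable def Yrow (n : ℕ) (lam : ℕ → ℝ) (X : ℕ → ℕ → ℝ) (i : ℕ) : ℕ → ℝ :=
  Yaux n lam X (n - i)

lemma Yrow_top (n : ℕ) (lam : ℕ → ℝ) (X : ℕ → ℕ → ℝ) : Yrow n lam X n = lam := by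
  unfold Yrow
  rw [Nat.sub_self]
  rfl

lemma Yrow_succ (n : ℕ) (lam : ℕ → ℝ) (X : ℕ → ℕ → ℝ) {i : ℕ} (h : i < n) :
    Yrow n lam X i = decompRow (X (i+1)) (Yrow n lam X (i+1)) (X i) := by
  have hk : n - i = (n - (i+1)) + 1 := by omega
  unfold Yrow
  rw [hk]
  show decompRow (X (n - (n - (i+1)))) (Yaux n lam X (n - (i+1))) (X (n - (n - (i+1) + 1))) = _
  have e1 : n - (n - (i+1)) = i + 1 := by omega
  have e2 : n - (n - (i+1) + 1) = i := by omega
  rw [e1, e2]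

lemma gcEntry_top (n : ℕ) (lam : ℕ → ℝ) (x : GCIndex n → ℝ) (j : ℕ) :
    gcEntry n lam x n j = lam j := by
  have h : ¬(1 ≤ j ∧ j ≤ n ∧ n ≤ n - 1) := by omega
  rw [gcEntry, dif_neg h, if_pos rfl]

lemma gc_add_mem {n : ℕ} {lam gam : ℕ → ℝ} {y z : GCIndex n → ℝ}
    (hy : y ∈ gcPolytope n lam) (hz : z ∈ gcPolytope n gam) :
    y + z ∈ gcPolytope n (fun j => lam j + gam j) := by
  have key : ∀ i j, 1 ≤ j → j ≤ i → i ≤ n →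
      gcEntry n (fun j => lam j + gam j) (y + z) i j
        = gcEntry n lam y i j + gcEntry n gam z i j := by
    intro i j h1 h2 h3
    by_cases h : i ≤ n - 1
    · rw [gcEntry, dif_pos ⟨h1, h2, h⟩, gcEntry, dif_pos ⟨h1, h2, h⟩,
        gcEntry, dif_pos ⟨h1, h2, h⟩]
      rfl
    · have : i = n := by omega
      subst this
      rw [gcEntry_top, gcEntry_top, gcEntry_top]
  intro i j h1 h2 h3
  rw [key i j h1 h2 (by omega), key (i+1) j h1 (by omega) (by omega),
    key (i+1) (j+1) (by omega) (by omega) (by omega)]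
  obtain ⟨a1, a2⟩ := hy i j h1 h2 h3
  obtain ⟨b1, b2⟩ := hz i j h1 h2 h3
  exact ⟨add_le_add a1 b1, add_le_add a2 b2⟩

lemma gc_smul_mem {n : ℕ} {lam : ℕ → ℝ} {y : GCIndex n → ℝ}
    (c : ℝ) (hc : 0 ≤ c) (hy : y ∈ gcPolytope n lam) :
    c • y ∈ gcPolytope n (fun j => c * lam j) := by
  have key : ∀ i j, 1 ≤ j → j ≤ i → i ≤ n →
      gcEntry n (fun j => c * lam j) (c • y) i j = c * gcEntry n lam y i j := by
    intro i j h1 h2 h3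
    by_cases h : i ≤ n - 1
    · rw [gcEntry, dif_pos ⟨h1, h2, h⟩, gcEntry, dif_pos ⟨h1, h2, h⟩]
      rfl
    · have : i = n := by omega
      subst this
      rw [gcEntry_top, gcEntry_top]
  intro i j h1 h2 h3
  rw [key i j h1 h2 (by omega), key (i+1) j h1 (by omega) (by omega),
    key (i+1) (j+1) (by omega) (by omega) (by omega)]
  obtain ⟨a1, a2⟩ := hy i j h1 h2 h3
  exact ⟨mul_le_mul_of_nonneg_left a1 hc, mul_le_mul_of_nonneg_left a2 hc⟩

lemma gc_zero {n : ℕ} {lam : ℕ → ℝ} (h0 : ∀ j, lam j = 0) {x : GCIndex n → ℝ}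
    (hx : x ∈ gcPolytope n lam) : x = 0 := by
  have key : ∀ k i j, n ≤ i + k → 1 ≤ j → j ≤ i → i ≤ n → gcEntry n lam x i j = 0 := by
    intro k
    induction k with
    | zero =>
      intro i j hk h1 h2 h3
      have : i = n := by omega
      subst this
      rw [gcEntry_top]
      exact h0 j
    | succ k ih =>
      intro i j hk h1 h2 h3
      by_cases h : i = n
      · subst h
        rw [gcEntry_top]
        exact h0 j
      · have h3' : i ≤ n - 1 := by omega
        obtain ⟨u1, u2⟩ := hx i j h1 h2 h3'
        have e1 := ih (i+1) j (by omega) h1 (by omega) (by omega)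
        have e2 := ih (i+1) (j+1) (by omega) (by omega) (by omega) (by omega)
        rw [e1] at u1
        rw [e2] at u2
        linarith
  funext p
  obtain ⟨⟨iv, hi⟩, ⟨jv, hj⟩⟩ := p
  have hj' : jv < iv + 1 := hj
  have hh := key n (iv+1) (jv+1) (by omega) (by omega) (by omega) (by omega)
  rw [gcEntry, dif_pos ⟨by omega, by omega, by omega⟩] at hh
  exact hh

lemma gc_zero_mem {n : ℕ} {lam : ℕ → ℝ} (h0 : ∀ j, lam j = 0) :
    (0 : GCIndex n → ℝ) ∈ gcPolytope n lam := by
  have key : ∀ i j, 1 ≤ j → j ≤ i → i ≤ n →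
      gcEntry n lam (0 : GCIndex n → ℝ) i j = 0 := by
    intro i j h1 h2 h3
    by_cases h : i ≤ n - 1
    · rw [gcEntry, dif_pos ⟨h1, h2, h⟩]
      rfl
    · have : i = n := by omega
      subst this
      rw [gcEntry_top]
      exact h0 j
  intro i j h1 h2 h3
  rw [key i j h1 h2 (by omega), key (i+1) j h1 (by omega) (by omega),
    key (i+1) (j+1) (by omega) (by omega) (by omega)]
  exact ⟨le_refl _, le_refl _⟩

lemma gc_nonempty {n : ℕ} {lam : ℕ → ℝ}
    (hlam : ∀ j, 1 ≤ j → j + 1 ≤ n → lam (j+1) ≤ lam j) :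
    (gcPolytope n lam).Nonempty := by
  refine ⟨fun p => lam (p.2.val + 1), ?_⟩
  have key : ∀ i j, 1 ≤ j → j ≤ i → i ≤ n →
      gcEntry n lam (fun p : GCIndex n => lam (p.2.val + 1)) i j = lam j := by
    intro i j h1 h2 h3
    by_cases h : i ≤ n - 1
    · rw [gcEntry, dif_pos ⟨h1, h2, h⟩]
      show lam (j - 1 + 1) = lam j
      have e : j - 1 + 1 = j := by omega
      rw [e]
    · have : i = n := by omega
      subst this
      rw [gcEntry_top]
  intro i j h1 h2 h3
  rw [key i j h1 h2 (by omega), key (i+1) j h1 (by omega) (by omega),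
    key (i+1) (j+1) (by omega) (by omega) (by omega)]
  exact ⟨le_refl _, hlam j h1 (by omega)⟩

lemma gc_decomp (n : ℕ) (lam gam : ℕ → ℝ)
    (hlam : ∀ j, 1 ≤ j → j + 1 ≤ n → lam (j+1) ≤ lam j)
    (hgam : ∀ j, 1 ≤ j → j + 1 ≤ n → gam (j+1) ≤ gam j)
    (x : GCIndex n → ℝ) (hx : x ∈ gcPolytope n (fun j => lam j + gam j)) :
    ∃ y ∈ gcPolytope n lam, ∃ z ∈ gcPolytope n gam, x = y + z := by
  set S : ℕ → ℝ := fun j => lam j + gam j with hS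
  set X : ℕ → ℕ → ℝ := fun i j => gcEntry n S x i j with hX
  set Y : ℕ → ℕ → ℝ := Yrow n lam X with hY
  have F0 : ∀ j, X n j = lam j + gam j := fun j => gcEntry_top n S x j
  have F1 : Y n = lam := Yrow_top n lam X
  have hXint : ∀ i j, 1 ≤ j → j ≤ i → i ≤ n - 1 →
      X i j ≤ X (i+1) j ∧ X (i+1) (j+1) ≤ X i j := fun i j h1 h2 h3 => hx i j h1 h2 h3
  have main : ∀ k i, i + k = n → 1 ≤ i →
      (∀ j, 1 ≤ j → j + 1 ≤ i → Y i (j+1) ≤ Y i j) ∧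
      (∀ j, 1 ≤ j → j + 1 ≤ i → X i (j+1) - Y i (j+1) ≤ X i j - Y i j) := by
    intro k
    induction k with
    | zero =>
      intro i hi _
      have : i = n := by omega
      subst this
      constructor
      · intro j h1 h2
        rw [F1]
        exact hlam j h1 h2
      · intro j h1 h2
        rw [F1, F0 (j+1), F0 j]
        have := hgam j h1 h2
        linarith
    | succ k ih =>
      intro i hi h1i
      have hin : i < n := by omega
      obtain ⟨hYd, hZd⟩ := ih (i+1) (by omega) (by omega)
      have spec := decompRow_spec (X (i+1)) (Y (i+1)) (X i) i
        (fun j h1 h2 => hYd j h1 (by omega))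
        (fun j h1 h2 => hZd j h1 (by omega))
        (fun j h1 h2 => (hXint i j h1 h2 (by omega)).1)
        (fun j h1 h2 => (hXint i j h1 h2 (by omega)).2)
      have hYi : Y i = decompRow (X (i+1)) (Y (i+1)) (X i) := Yrow_succ n lam X hin
      constructor
      · intro j h1 h2
        have s1 := spec j h1 (by omega)
        have s2 := spec (j+1) (by omega) (by omega)
        rw [hYi]
        exact le_trans s2.2.1 s1.1
      · intro j h1 h2
        have s1 := spec j h1 (by omega)
        have s2 := spec (j+1) (by omega) (by omega)
        rw [hYi]
        have t1 := s2.2.2.2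
        have t2 := s1.2.2.1
        linarith
  have rowspec : ∀ i j, 1 ≤ j → j ≤ i → i ≤ n - 1 →
      Y (i+1) (j+1) ≤ Y i j ∧ Y i j ≤ Y (i+1) j ∧
      X (i+1) (j+1) - Y (i+1) (j+1) ≤ X i j - Y i j ∧
      X i j - Y i j ≤ X (i+1) j - Y (i+1) j := by
    intro i j h1 h2 h3
    have hin : i < n := by omega
    obtain ⟨hYd, hZd⟩ := main (n - (i+1)) (i+1) (by omega) (by omega)
    have spec := decompRow_spec (X (i+1)) (Y (i+1)) (X i) i
      (fun j h1 h2 => hYd j h1 (by omega))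
      (fun j h1 h2 => hZd j h1 (by omega))
      (fun j h1 h2 => (hXint i j h1 h2 (by omega)).1)
      (fun j h1 h2 => (hXint i j h1 h2 (by omega)).2)
    have hYi : Y i = decompRow (X (i+1)) (Y (i+1)) (X i) := Yrow_succ n lam X hin
    rw [hYi]
    exact spec j h1 h2
  have hyE : ∀ i j, 1 ≤ j → j ≤ i → i ≤ n →
      gcEntry n lam (fun p : GCIndex n => Y (p.1.val + 1) (p.2.val + 1)) i j = Y i j := by
    intro i j h1 h2 h3
    by_cases h : i ≤ n - 1
    · rw [gcEntry, dif_pos ⟨h1, h2, h⟩]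
      show Y (i - 1 + 1) (j - 1 + 1) = Y i j
      have e1 : i - 1 + 1 = i := by omega
      have e2 : j - 1 + 1 = j := by omega
      rw [e1, e2]
    · have : i = n := by omega
      subst this
      rw [gcEntry_top]
      exact (congrFun F1 j).symm
  have hzE : ∀ i j, 1 ≤ j → j ≤ i → i ≤ n →
      gcEntry n gam
        (fun p : GCIndex n => X (p.1.val + 1) (p.2.val + 1) - Y (p.1.val + 1) (p.2.val + 1))
        i j = X i j - Y i j := by
    intro i j h1 h2 h3
    by_cases h : i ≤ n - 1
    · rw [gcEntry, dif_pos ⟨h1, h2, h⟩]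
      show X (i - 1 + 1) (j - 1 + 1) - Y (i - 1 + 1) (j - 1 + 1) = X i j - Y i j
      have e1 : i - 1 + 1 = i := by omega
      have e2 : j - 1 + 1 = j := by omega
      rw [e1, e2]
    · have : i = n := by omega
      subst this
      rw [gcEntry_top, F0 j, congrFun F1 j]
      ring
  refine ⟨fun p : GCIndex n => Y (p.1.val + 1) (p.2.val + 1), ?_,
    fun p : GCIndex n => X (p.1.val + 1) (p.2.val + 1) - Y (p.1.val + 1) (p.2.val + 1),
    ?_, ?_⟩
  · intro i j h1 h2 h3
    rw [hyE i j h1 h2 (by omega), hyE (i+1) j h1 (by omega) (by omega),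
      hyE (i+1) (j+1) (by omega) (by omega) (by omega)]
    obtain ⟨r1, r2, r3, r4⟩ := rowspec i j h1 h2 h3
    exact ⟨r2, r1⟩
  · intro i j h1 h2 h3
    rw [hzE i j h1 h2 (by omega), hzE (i+1) j h1 (by omega) (by omega),
      hzE (i+1) (j+1) (by omega) (by omega) (by omega)]
    obtain ⟨r1, r2, r3, r4⟩ := rowspec i j h1 h2 h3
    exact ⟨r4, r3⟩
  · funext p
    obtain ⟨⟨iv, hi⟩, ⟨jv, hj⟩⟩ := p
    have hj' : jv < iv + 1 := hj
    show x ⟨⟨iv, hi⟩, ⟨jv, hj⟩⟩ =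
      Y (iv+1) (jv+1) + (X (iv+1) (jv+1) - Y (iv+1) (jv+1))
    have hXe : X (iv+1) (jv+1) = x ⟨⟨iv, hi⟩, ⟨jv, hj⟩⟩ := by
      show gcEntry n S x (iv+1) (jv+1) = _
      rw [gcEntry, dif_pos ⟨by omega, by omega, by omega⟩]
      rfl
    rw [hXe]
    ring

lemma gc_smul_eq {n : ℕ} {lam : ℕ → ℝ}
    (hlam : ∀ j, 1 ≤ j → j + 1 ≤ n → lam (j+1) ≤ lam j)
    {c : ℝ} (hc : 0 ≤ c) :
    gcPolytope n (fun j => c * lam j) = c • gcPolytope n lam := by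
  rcases eq_or_lt_of_le hc with h0 | hpos
  · rw [← h0]
    rw [Set.zero_smul_set (gc_nonempty hlam)]
    ext x
    constructor
    · intro hx
      have := gc_zero (lam := fun j => (0:ℝ) * lam j) (fun j => by ring) hx
      simpa using this
    · intro hx
      have hx0 : x = 0 := by simpa using hx
      subst hx0
      exact gc_zero_mem (fun j => by ring)
  · ext x
    constructor
    · intro hx
      rw [Set.mem_smul_set]
      refine ⟨c⁻¹ • x, ?_, ?_⟩
      · have h2 := gc_smul_mem (lam := fun j => c * lam j) c⁻¹ (by positivity) hx
        have e : (fun j => c⁻¹ * (c * lam j)) = lam := by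
          funext j
          field_simp
        rwa [e] at h2
      · rw [smul_smul, mul_inv_cancel₀ (ne_of_gt hpos), one_smul]
    · intro hx
      rw [Set.mem_smul_set] at hx
      obtain ⟨w, hw, rfl⟩ := hx
      exact gc_smul_mem c hc hw

/-- The map `λ ↦ Δ_GC(λ)` is linear: for `λ, γ` with decreasing coordinates and
`c₁, c₂ ≥ 0`, `Δ_GC(c₁λ + c₂γ) = c₁Δ_GC(λ) + c₂Δ_GC(γ)` (Minkowski sum). -/
theorem gcPolytope_linear (n : ℕ) (lam gam : ℕ → ℝ)
    (hlam : ∀ i j, 1 ≤ i → i ≤ j → j ≤ n → lam j ≤ lam i)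
    (hgam : ∀ i j, 1 ≤ i → i ≤ j → j ≤ n → gam j ≤ gam i)
    (c₁ c₂ : ℝ) (hc₁ : 0 ≤ c₁) (hc₂ : 0 ≤ c₂) :
    gcPolytope n (fun j => c₁ * lam j + c₂ * gam j) =
      c₁ • gcPolytope n lam + c₂ • gcPolytope n gam := by

  have hlam' : ∀ j, 1 ≤ j → j + 1 ≤ n → lam (j+1) ≤ lam j :=
    fun j h1 h2 => hlam j (j+1) h1 (by omega) h2
  have hgam' : ∀ j, 1 ≤ j → j + 1 ≤ n → gam (j+1) ≤ gam j :=
    fun j h1 h2 => hgam j (j+1) h1 (by omega) h2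
  have hl1 : ∀ j, 1 ≤ j → j + 1 ≤ n → c₁ * lam (j+1) ≤ c₁ * lam j :=
    fun j h1 h2 => mul_le_mul_of_nonneg_left (hlam' j h1 h2) hc₁
  have hl2 : ∀ j, 1 ≤ j → j + 1 ≤ n → c₂ * gam (j+1) ≤ c₂ * gam j :=
    fun j h1 h2 => mul_le_mul_of_nonneg_left (hgam' j h1 h2) hc₂
  have hsum : gcPolytope n (fun j => c₁ * lam j + c₂ * gam j)
      = gcPolytope n (fun j => c₁ * lam j) + gcPolytope n (fun j => c₂ * gam j) := by
    ext x
    constructor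
    · intro hx
      obtain ⟨y, hy, z, hz, hxyz⟩ :=
        gc_decomp n (fun j => c₁ * lam j) (fun j => c₂ * gam j) hl1 hl2 x hx
      rw [hxyz]
      exact Set.add_mem_add hy hz
    · intro hx
      rw [Set.mem_add] at hx
      obtain ⟨y, hy, z, hz, hxyz⟩ := hx
      rw [← hxyz]
      exact gc_add_mem hy hz
  rw [hsum, gc_smul_eq hlam' hc₁, gc_smul_eq hgam' hc₂]
end
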